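/- Let f : ℝ → ℂ be a continuous positive definite function. Then there exist a complex Hilbert space H, a strongly continuous one-parameter group of unitary operators (U_t)_{t ∈ ℝ} on H (so U_{s}U_{t} = U_{s+t} for all s, t, each U_t is unitary, and t ↦ U_t w is continuous for every w ∈ H), and a vector w₀ ∈ H such that f(t) = ⟨U_t w₀, w₀⟩_H for all t ∈ ℝ. -/

import Mathlib

/-!
On `G →₀ ℂ` the form `⟪g, h⟫ = ∑ₓ ∑ᵧ conj (g x) h y f (y - x)` is Hermitian and positive
semidefinite exactly because `f` is positive definite, and it is invariant under right translation
of the support since `(y + t) - (x + t) = y - x`. The separated completion is a Hilbert space on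
which the translations act as unitaries, and `⟪δ₀, δₜ⟫ = f t`. For strong continuity, the matrix
coefficients `t ↦ ⟪g(· - t), h⟫` of finitely supported `g, h` are finite sums of translates of `f`,
hence continuous, which for a curve of constant norm forces norm continuity; this passes to the
completion because the translations are uniformly equicontinuous.
-/

open Filter Topology UniformSpace ComplexConjugate ComplexOrder
open scoped InnerProductSpace

section InnerProductSpace

variable {𝕜 E X : Type*} [RCLike 𝕜] [SeminormedAddCommGroup E] [InnerProductSpace 𝕜 E]
  [TopologicalSpace X]

theorem continuous_of_norm_eq_of_continuous_inner {u : X → E} {c : ℝ} (hnorm : ∀ t, ‖u t‖ = c)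
    (hinner : ∀ s, Continuous fun t => ⟪u t, u s⟫_𝕜) : Continuous u := by
  refine continuous_iff_continuousAt.2 fun s => tendsto_iff_norm_sub_tendsto_zero.2 ?_
  have hsq : ∀ t, ‖u t - u s‖ = √(2 * c ^ 2 - 2 * RCLike.re ⟪u t, u s⟫_𝕜) := fun t => by
    rw [← Real.sqrt_sq (norm_nonneg _), @norm_sub_sq 𝕜, hnorm, hnorm]; ring_nf
  have hcont : Continuous fun t => √(2 * c ^ 2 - 2 * RCLike.re ⟪u t, u s⟫_𝕜) :=
    (continuous_const.sub (continuous_const.mul (RCLike.continuous_re.comp (hinner s)))).sqrt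
  have h0 : √(2 * c ^ 2 - 2 * RCLike.re ⟪u s, u s⟫_𝕜) = 0 := by rw [← hsq, sub_self, norm_zero]
  simpa only [hsq, h0] using hcont.tendsto s

end InnerProductSpace

namespace LinearIsometryEquiv

variable {𝕜 E F X : Type*} [NormedField 𝕜] [SeminormedAddCommGroup E] [NormedSpace 𝕜 E]
  [SeminormedAddCommGroup F] [NormedSpace 𝕜 F]

noncomputable def completion (e : E ≃ₗᵢ[𝕜] F) : Completion E ≃ₗᵢ[𝕜] Completion F where
  __ := (e : E →L[𝕜] F).completion
  invFun := (e.symm : F →L[𝕜] E).completion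
  left_inv w := by
    induction w using Completion.induction_on with
    | hp =>
      exact isClosed_eq (Completion.continuous_map.comp Completion.continuous_map) continuous_id
    | ih g => simp
  right_inv w := by
    induction w using Completion.induction_on with
    | hp =>
      exact isClosed_eq (Completion.continuous_map.comp Completion.continuous_map) continuous_id
    | ih g => simp
  norm_map' w := by
    induction w using Completion.induction_on with
    | hp => exact isClosed_eq (continuous_norm.comp Completion.continuous_map) continuous_norm
    | ih g => simp

@[simp]
theorem completion_coe (e : E ≃ₗᵢ[𝕜] F) (g : E) : e.completion g = e g :=
  ContinuousLinearMap.completion_apply_coe _ g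

theorem completion_apply_completion {G : Type*} [SeminormedAddCommGroup G] [NormedSpace 𝕜 G]
    (e : E ≃ₗᵢ[𝕜] F) (e' : F ≃ₗᵢ[𝕜] G) (w : Completion E) :
    e'.completion (e.completion w) = (e.trans e').completion w := by
  induction w using Completion.induction_on with
  | hp => exact isClosed_eq (by fun_prop) (by fun_prop)
  | ih g => simp

theorem continuous_completion_apply [TopologicalSpace X] {U : X → E ≃ₗᵢ[𝕜] F}
    (hU : ∀ g, Continuous fun t => U t g) (w : Completion E) :
    Continuous fun t => (U t).completion w := by
  refine continuous_iff_continuousAt.2 fun t₀ => ?_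
  have hequi : Equicontinuous fun t => ⇑(U t).completion :=
    (LipschitzWith.uniformEquicontinuous _ 1 fun t => (U t).completion.lipschitz).equicontinuous
  induction w using Completion.induction_on with
  | hp => exact hequi.isClosed_setOfPred_tendsto (U t₀).completion.continuous
  | ih g =>
    simp only [ContinuousAt, completion_coe]
    exact ((Completion.continuous_coe F).tendsto _).comp ((hU g).tendsto t₀)

end LinearIsometryEquiv

section PositiveDefinite

variable {G : Type*} [AddGroup G]

def IsPositiveDefinite (f : G → ℂ) : Prop :=
  ∀ (n : ℕ) (x : Fin n → G) (c : Fin n → ℂ), 0 ≤ ∑ i, ∑ j, c i * conj (c j) * f (x i - x j)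

namespace IsPositiveDefinite

variable {f : G → ℂ}

theorem sum_sum_nonneg (hf : IsPositiveDefinite f) {ι : Type*} [Fintype ι] (x : ι → G)
    (c : ι → ℂ) : 0 ≤ ∑ i, ∑ j, c i * conj (c j) * f (x i - x j) := by
  let e := Fintype.equivFin ι
  have h := hf _ (x ∘ e.symm) (c ∘ e.symm)
  simpa only [Function.comp_apply, e.symm.sum_comp
    (fun i => ∑ j, c i * conj (c j) * f (x i - x j)),
    fun i => e.symm.sum_comp (fun j => c i * conj (c j) * f (x i - x j))] using h

theorem finsuppSum_nonneg (hf : IsPositiveDefinite f) (g : G →₀ ℂ) :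
    0 ≤ g.sum fun x a => g.sum fun y b => conj a * b * f (y - x) := by
  have h := hf.sum_sum_nonneg (fun x : g.support => (x : G)) (fun x => g x)
  simp only [Finsupp.sum]
  rw [Finset.sum_comm]
  simpa only [← Finset.sum_coe_sort g.support, mul_comm (conj _)] using h

-- Test positivity on the points `0, t` with the coefficients `(1, 1)` and `(1, i)`.
theorem conj_apply (hf : IsPositiveDefinite f) (t : G) : conj (f t) = f (-t) := by
  have h₀ := hf 1 ![0] ![1]
  have h₁ := hf 2 ![0, t] ![1, 1]
  have h₂ := hf 2 ![0, t] ![1, Complex.I]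
  simp [Fin.sum_univ_two, Complex.nonneg_iff] at h₀ h₁ h₂
  apply Complex.ext <;> simp <;> linarith [h₀.2, h₁.2, h₂.2]

end IsPositiveDefinite

end PositiveDefinite

section GNS

variable {G : Type*} [AddGroup G]

/-- The type synonym only carries `f`, which selects the inner product below; `single x a` stands
for `a • U x w₀`. -/
abbrev GNSSpace (_f : G → ℂ) : Type _ := G →₀ ℂ

namespace GNSSpace

variable (f : G → ℂ) [Fact (IsPositiveDefinite f)]

noncomputable instance instCore : PreInnerProductSpace.Core ℂ (GNSSpace f) where
  inner g h := g.sum fun x a => h.sum fun y b => conj a * b * f (y - x)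
  conj_inner_symm g h := by
    rw [Finsupp.sum_comm]
    simp only [map_finsuppSum, map_mul, Complex.conj_conj,
      (Fact.out : IsPositiveDefinite f).conj_apply, neg_sub]
    exact Finsupp.sum_congr fun x _ => Finsupp.sum_congr fun y _ => by ring
  add_left _ _ _ := by
    rw [Finsupp.sum_add_index'] <;> simp [← Finsupp.sum_add, add_mul]
  smul_left _ _ _ := by
    rw [Finsupp.sum_smul_index] <;> simp [Finsupp.mul_sum, ← mul_assoc]
  re_inner_nonneg g :=
    (Complex.nonneg_iff.1 ((Fact.out : IsPositiveDefinite f).finsuppSum_nonneg g)).1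

noncomputable instance : SeminormedAddCommGroup (GNSSpace f) :=
  InnerProductSpace.Core.toSeminormedAddCommGroup (𝕜 := ℂ)

noncomputable instance : InnerProductSpace ℂ (GNSSpace f) := .ofCore _

theorem inner_def (g h : GNSSpace f) :
    ⟪g, h⟫_ℂ = g.sum fun x a => h.sum fun y b => conj a * b * f (y - x) := rfl

theorem inner_single_single (x y : G) (a b : ℂ) :
    ⟪(Finsupp.single x a : GNSSpace f), (Finsupp.single y b : GNSSpace f)⟫_ℂ
      = conj a * b * f (y - x) := by
  simp [inner_def]

noncomputable def shift (t : G) : GNSSpace f ≃ₗᵢ[ℂ] GNSSpace f :=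
  (Finsupp.domLCongr (Equiv.addRight t)).isometryOfInner fun g h => by
    simp [inner_def]

theorem shift_apply (t : G) (g : GNSSpace f) :
    shift f t g = Finsupp.mapDomain (· + t) g := by
  simp [shift, Finsupp.equivMapDomain_eq_mapDomain]

theorem shift_single (t x : G) (a : ℂ) :
    shift f t (Finsupp.single x a) = Finsupp.single (x + t) a := by
  simp [shift_apply]

theorem shift_trans_shift (s t : G) : (shift f s).trans (shift f t) = shift f (s + t) := by
  ext g : 1
  simp [shift_apply, ← Finsupp.mapDomain_comp, Function.comp_def, add_assoc]

theorem inner_shift_left (t : G) (g h : GNSSpace f) :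
    ⟪shift f t g, h⟫_ℂ = g.sum fun x a => h.sum fun y b => conj a * b * f (y - (x + t)) := by
  rw [shift_apply, inner_def, Finsupp.sum_mapDomain_index_inj (add_left_injective t)]

end GNSSpace

theorem GNSSpace.continuous_shift_apply [TopologicalSpace G] [IsTopologicalAddGroup G]
    {f : G → ℂ} [Fact (IsPositiveDefinite f)] (hf : Continuous f) (g : GNSSpace f) :
    Continuous fun t => shift f t g := by
  refine continuous_of_norm_eq_of_continuous_inner (𝕜 := ℂ) (fun t => (shift f t).norm_map g)
    fun s => ?_
  simp only [inner_shift_left, Finsupp.sum]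
  fun_prop

end GNS

/-- GNS/Stone-type representation: a continuous positive definite function `f : ℝ → ℂ`
is of the form `f(t) = ⟨U_t w₀, w₀⟩` for a strongly continuous one-parameter unitary
group `(U_t)` on a complex Hilbert space `H` and a vector `w₀ ∈ H`.
(Here `⟨·, ·⟩` is linear in the first argument, so in Mathlib's convention it is
`inner w₀ (U t w₀)`.) -/
theorem stmt_9 (f : ℝ → ℂ) (hf : Continuous f)
    (hpd : ∀ (n : ℕ) (x : Fin n → ℝ) (c : Fin n → ℂ),
      0 ≤ ∑ i, ∑ j, c i * (starRingEnd ℂ) (c j) * f (x i - x j)) :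
    ∃ (H : Type) (_ : NormedAddCommGroup H) (_ : InnerProductSpace ℂ H)
      (_ : CompleteSpace H) (U : ℝ → (H ≃ₗᵢ[ℂ] H)) (w₀ : H),
      (∀ s t : ℝ, ∀ w : H, U s (U t w) = U (s + t) w) ∧
      (∀ w : H, Continuous fun t : ℝ => U t w) ∧
      (∀ t : ℝ, f t = inner ℂ w₀ (U t w₀)) := by
  have : Fact (IsPositiveDefinite f) := ⟨hpd⟩
  refine ⟨Completion (GNSSpace f), inferInstance, inferInstance, inferInstance,
    fun t => (GNSSpace.shift f t).completion, ((Finsupp.single 0 1 : GNSSpace f) : Completion _),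
    fun s t w => ?_, LinearIsometryEquiv.continuous_completion_apply
      (GNSSpace.continuous_shift_apply hf), fun t => ?_⟩
  · rw [LinearIsometryEquiv.completion_apply_completion, GNSSpace.shift_trans_shift, add_comm]
  · rw [LinearIsometryEquiv.completion_coe, Completion.inner_coe, GNSSpace.shift_single,
      GNSSpace.inner_single_single]
    simp
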